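/- Let ⋆ be a semistar operation on an integral domain D. Then D is a ⋆-quasi-Prüfer domain (every prime Q of D[X] with Q ⊆ P[X] for some quasi-⋆-prime P of D satisfies Q = (Q∩D)[X]) if and only if D_P is a quasi-Prüfer domain for each quasi-⋆-prime ideal P of D. -/

import Mathlib

/-- A semistar operation on `D` (with quotient field `K`) in the sense of Okabe–Matsuda:
a map on `D`-submodules of `K` that is extensive, monotone and idempotent on nonzero
submodules, and commutes with multiplication by nonzero elements of `K`. -/
structure SemistarOp (D K : Type*) [CommRing D] [Field K] [Algebra D K] where
  op : Submodule D K → Submodule D K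
  le_op : ∀ E : Submodule D K, E ≠ ⊥ → E ≤ op E
  mono : ∀ E F : Submodule D K, E ≠ ⊥ → E ≤ F → op E ≤ op F
  idem : ∀ E : Submodule D K, E ≠ ⊥ → op (op E) = op E
  smul : ∀ (x : K) (E : Submodule D K), x ≠ 0 → E ≠ ⊥ →
    op (Submodule.map (LinearMap.mulLeft D x) E)
      = Submodule.map (LinearMap.mulLeft D x) (op E)

/-- A quasi-`⋆`-prime: a nonzero prime ideal `P` of `D` with `P^⋆ ∩ D = P`. -/
def QuasiStarPrime {D K : Type*} [CommRing D] [Field K] [Algebra D K]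
    (s : SemistarOp D K) (P : Ideal D) : Prop :=
  P.IsPrime ∧ P ≠ ⊥ ∧
    Submodule.comap (Algebra.linearMap D K)
      (s.op (Submodule.map (Algebra.linearMap D K) P)) = P

/-- `⋆`-quasi-Prüfer domain: every prime `Q` of `D[X]` contained in `P[X]` for some
quasi-`⋆`-prime `P` is extended from `D`. -/
def StarQuasiPrufer {D K : Type*} [CommRing D] [Field K] [Algebra D K]
    (s : SemistarOp D K) : Prop :=
  ∀ Q : Ideal (Polynomial D), Q.IsPrime →
    (∃ P : Ideal D, QuasiStarPrime s P ∧
      Q ≤ Ideal.map (Polynomial.C : D →+* Polynomial D) P) →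
    Q = Ideal.map (Polynomial.C : D →+* Polynomial D)
      (Q.comap (Polynomial.C : D →+* Polynomial D))

/-- Quasi-Prüfer domain: every prime of `R[X]` contained in `P[X]` for some prime `P`
of `R` is extended from `R`. -/
def QuasiPrufer (R : Type*) [CommRing R] : Prop :=
  ∀ P : Ideal R, P.IsPrime → ∀ Q : Ideal (Polynomial R), Q.IsPrime →
    Q ≤ Ideal.map (Polynomial.C : R →+* Polynomial R) P →
    Q = Ideal.map (Polynomial.C : R →+* Polynomial R)
      (Q.comap (Polynomial.C : R →+* Polynomial R))

open Polynomial

section PolyLocAux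
variable {D : Type*} [CommRing D] [IsDomain D] (P : Ideal D) [P.IsPrime]

/-- `D_P[X]` is the localization of `D[X]` at the monoid of constants outside `P`. -/
theorem polyLoc_isLocalization :
    letI : Algebra D[X] (Localization.AtPrime P)[X] :=
      (mapRingHom (algebraMap D (Localization.AtPrime P))).toAlgebra
    IsLocalization (P.primeCompl.map (C : D →+* D[X])) (Localization.AtPrime P)[X] := by
  letI : Algebra D[X] (Localization.AtPrime P)[X] :=
    (mapRingHom (algebraMap D (Localization.AtPrime P))).toAlgebra
  set L := Localization.AtPrime P
  set f := algebraMap D L with hf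
  have hinj : Function.Injective f :=
    IsLocalization.injective L P.primeCompl_le_nonZeroDivisors
  refine ⟨?_⟩
  constructor
  · rintro ⟨_, u, hu, rfl⟩
    show IsUnit (mapRingHom f (C u))
    rw [coe_mapRingHom, map_C]
    exact (IsLocalization.map_units L ⟨u, hu⟩).map (C : L →+* L[X])
  · intro z
    obtain ⟨b, hb⟩ := IsLocalization.integerNormalization_map_to_map P.primeCompl z
    refine ⟨⟨IsLocalization.integerNormalization P.primeCompl z,
      ⟨C (b : D), ⟨(b : D), b.2, rfl⟩⟩⟩, ?_⟩
    show z * mapRingHom f (C (b : D)) = mapRingHom f _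
    rw [coe_mapRingHom, map_C, hb]
    ext i
    simp [coeff_smul, Algebra.smul_def, mul_comm]
    exact Or.inl rfl
  · intro x y hxy
    refine ⟨1, ?_⟩
    have : x.map f = y.map f := hxy
    simp [Polynomial.map_injective f hinj this]

end PolyLocAux

/-- `D` is `⋆`-quasi-Prüfer iff `D_P` is quasi-Prüfer for every
quasi-`⋆`-prime `P` of `D`. -/
theorem starQuasiPrufer_iff_localizations_quasiPrufer
    (D K : Type*) [CommRing D] [IsDomain D] [Field K] [Algebra D K] [IsFractionRing D K]
    (s : SemistarOp D K) :
    StarQuasiPrufer s ↔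
      ∀ (P : Ideal D) [P.IsPrime], QuasiStarPrime s P →
        QuasiPrufer (Localization.AtPrime P) := by
  constructor
  · -- forward direction
    intro h P hPp hQP P' hP' Q' hQ' hle
    set L := Localization.AtPrime P
    set f := algebraMap D L with hf
    set Q : Ideal D[X] := Q'.comap (mapRingHom f) with hQdef
    haveI hQprime : Q.IsPrime := hQ'.comap _
    have hQle : Q ≤ Ideal.map (C : D →+* D[X]) P := by
      intro p hp
      rw [Ideal.mem_map_C_iff]
      intro n
      have h2 : (p.map f) ∈ Ideal.map (C : L →+* L[X]) (IsLocalRing.maximalIdeal L) :=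
        (hle.trans (Ideal.map_mono (IsLocalRing.le_maximalIdeal hP'.ne_top))) hp
      rw [Ideal.mem_map_C_iff] at h2
      have h3 := h2 n
      rw [coeff_map] at h3
      have h4 : p.coeff n ∈ (IsLocalRing.maximalIdeal L).comap f := h3
      exact (Localization.AtPrime.comap_maximalIdeal (I := P)).le h4
    have hQeq := h Q hQprime ⟨P, hQP, hQle⟩
    apply le_antisymm
    · intro p hp
      rw [Ideal.mem_map_C_iff]
      intro n
      obtain ⟨b, hbm, hb⟩ := IsLocalization.integerNormalization_spec P.primeCompl p
      set q := IsLocalization.integerNormalization P.primeCompl p with hq'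
      have hq : q ∈ Q := by
        show q.map f ∈ Q'
        have heq : q.map f = C (f b) * p := by
          ext i
          rw [show map f q = b • p from hb, coeff_smul, coeff_C_mul, Algebra.smul_def]
        rw [heq]; exact Q'.mul_mem_left _ hp
      rw [hQeq, Ideal.mem_map_C_iff] at hq
      have h3 : (C (f (q.coeff n)) : L[X]) ∈ Q' := by
        have h5 : (C (q.coeff n) : D[X]) ∈ Q := hq n
        have h6 : ((C (q.coeff n)).map f) ∈ Q' := h5
        rwa [map_C] at h6
      have hcoeff : f (q.coeff n) = f b * p.coeff n := by
        rw [← coeff_map f, show map f q = b • p from hb, coeff_smul, Algebra.smul_def]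
      rw [hcoeff, C_mul] at h3
      show p.coeff n ∈ Q'.comap (C : L →+* L[X])
      rcases hQ'.mem_or_mem h3 with hcase | hcase
      · exact absurd (Ideal.eq_top_of_isUnit_mem _ hcase
          ((IsLocalization.map_units L (⟨b, hbm⟩ : P.primeCompl)).map (C : L →+* L[X]))) hQ'.ne_top
      · exact hcase
    · exact Ideal.map_le_iff_le_comap.mpr le_rfl
  · -- backward direction
    rintro h Q hQ ⟨P, hQP, hle⟩
    haveI hPp : P.IsPrime := hQP.1
    set L := Localization.AtPrime P
    set f := algebraMap D L with hf
    letI : Algebra D[X] L[X] := (mapRingHom f).toAlgebra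
    set M : Submonoid D[X] := P.primeCompl.map (C : D →+* D[X]) with hM
    haveI : IsLocalization M L[X] := polyLoc_isLocalization P
    have hdisj : Disjoint (M : Set D[X]) (Q : Set D[X]) := by
      rw [Set.disjoint_left]
      rintro _ ⟨u, hu, rfl⟩ hmem
      have h1 := hle hmem
      rw [Ideal.mem_map_C_iff] at h1
      have h2 := h1 0
      rw [coeff_C] at h2
      simp only [if_pos rfl] at h2
      exact hu h2
    set Q' := Q.map (algebraMap D[X] L[X]) with hQ'def
    haveI hQ'p : Q'.IsPrime := IsLocalization.isPrime_of_isPrime_disjoint M _ Q hQ hdisj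
    have hcomap : Q'.comap (algebraMap D[X] L[X]) = Q :=
      IsLocalization.comap_map_of_isPrime_disjoint M _ hQ hdisj
    have hQ'le : Q' ≤ Ideal.map (C : L →+* L[X]) (IsLocalRing.maximalIdeal L) := by
      have step1 : Q' ≤ Ideal.map (algebraMap D[X] L[X]) (Ideal.map (C : D →+* D[X]) P) :=
        Ideal.map_mono hle
      have step2 : Ideal.map (algebraMap D[X] L[X]) (Ideal.map (C : D →+* D[X]) P)
          = Ideal.map (C : L →+* L[X]) (Ideal.map f P) := by
        rw [Ideal.map_map, Ideal.map_map]
        congr 1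
        refine RingHom.ext fun a => ?_
        show (mapRingHom f) (C a) = C (f a)
        rw [coe_mapRingHom, map_C]
      have step3 : Ideal.map (C : L →+* L[X]) (Ideal.map f P)
          ≤ Ideal.map (C : L →+* L[X]) (IsLocalRing.maximalIdeal L) :=
        Ideal.map_mono (by
          rw [Ideal.map_le_iff_le_comap]; exact (Localization.AtPrime.comap_maximalIdeal (I := P)).ge)
      exact step1.trans (step2 ▸ step3)
    have hQ'eq := h P hQP (IsLocalRing.maximalIdeal L) inferInstance Q' hQ'p hQ'le
    apply le_antisymm
    · intro p hp
      rw [Ideal.mem_map_C_iff]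
      intro n
      show (C (p.coeff n) : D[X]) ∈ Q
      rw [← hcomap]
      show (C (p.coeff n)).map f ∈ Q'
      have hp' : p.map f ∈ Q' := by
        rw [← hcomap] at hp; exact hp
      rw [hQ'eq, Ideal.mem_map_C_iff] at hp'
      have h1 := hp' n
      rw [coeff_map] at h1
      rw [map_C]
      exact h1
    · exact Ideal.map_le_iff_le_comap.mpr le_rfl
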